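/- arXiv:2406.16653 — 10 statements merged into one kernel-verified Lean document; each statement's English description precedes it below -/
import Mathlib

section
/- Let P, Q, R be graph patterns such that the pattern P ∧ (Q OPT R) is well-designed. Then for every RDF graph G, ⟦P ∧ (Q OPT R)⟧_G = ⟦(P ∧ Q) OPT R⟧_G. -/
/-! Ground atoms of an RDF graph: class atoms B(c) and property atoms p(c,d).
Nodes, class names, property names and variables are represented by natural numbers
(the tags of the constructors keep the sorts apart). -/

inductive GroundAtom : Type where
  | cls (B : ℕ) (c : ℕ)
  | prop (p : ℕ) (c d : ℕ)

/-- Terms of a BGP atom: variables or nodes. -/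
inductive Term : Type where
  | var (x : ℕ)
  | node (c : ℕ)

/-- Atoms of a basic graph pattern. -/
inductive BAtom : Type where
  | cls (B : ℕ) (t : Term)
  | prop (p : ℕ) (t1 t2 : Term)

/-- A SPARQL mapping: a partial function from variables to nodes. -/
def Mapping : Type := ℕ → Option ℕ

/-- The domain of a mapping. -/
def Mapping.dom (μ : Mapping) : Set ℕ := {x | (μ x).isSome}

def Term.vars : Term → Set ℕ
  | .var x => {x}
  | .node _ => ∅

def BAtom.vars : BAtom → Set ℕ
  | .cls _ t => t.vars
  | .prop _ t1 t2 => t1.vars ∪ t2.vars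

/-- Variables of a BGP (a finite conjunction of atoms, given as a list). -/
def bgpVars (Q : List BAtom) : Set ℕ := ⋃ ψ ∈ Q, ψ.vars

def Term.eval (μ : Mapping) : Term → Option ℕ
  | .var x => μ x
  | .node c => some c

/-- μ(ψ): the ground atom obtained by applying μ to ψ (defined when μ covers all variables of ψ). -/
def BAtom.ground (μ : Mapping) : BAtom → Option GroundAtom
  | .cls B t => (t.eval μ).map (fun c => GroundAtom.cls B c)
  | .prop p t1 t2 =>
      (t1.eval μ).bind (fun c => (t2.eval μ).map (fun d => GroundAtom.prop p c d))

/-- ⟦Q⟧_G for a BGP Q: mappings μ with dom(μ) = vars(Q) sending every atom of Q into G. -/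
def evalBGP (Q : List BAtom) (G : Set GroundAtom) : Set Mapping :=
  {μ | μ.dom = bgpVars Q ∧ ∀ ψ ∈ Q, ∃ a ∈ G, BAtom.ground μ ψ = some a}

/-- Compatibility of two mappings: they agree on the common domain. -/
def Mapping.compatible (μ1 μ2 : Mapping) : Prop :=
  ∀ x ∈ μ1.dom ∩ μ2.dom, μ1 x = μ2 x

/-- Union μ1 ∪ μ2 of two (compatible) mappings. -/
def Mapping.union (μ1 μ2 : Mapping) : Mapping :=
  fun x => (μ1 x).orElse (fun _ => μ2 x)

/-- Graph patterns: BGPs combined with ∧ and OPT. -/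
inductive Pattern : Type where
  | bgp (Q : List BAtom)
  | and (P1 P2 : Pattern)
  | opt (P1 P2 : Pattern)

def Pattern.vars : Pattern → Set ℕ
  | .bgp Q => bgpVars Q
  | .and P1 P2 => P1.vars ∪ P2.vars
  | .opt P1 P2 => P1.vars ∪ P2.vars

/-- Evaluation ⟦·⟧_G of graph patterns. -/
def evalPattern (G : Set GroundAtom) : Pattern → Set Mapping
  | .bgp Q => evalBGP Q G
  | .and P1 P2 =>
      {μ | ∃ μ1 ∈ evalPattern G P1, ∃ μ2 ∈ evalPattern G P2,
        Mapping.compatible μ1 μ2 ∧ μ = Mapping.union μ1 μ2}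
  | .opt P1 P2 =>
      {μ | ∃ μ1 ∈ evalPattern G P1, ∃ μ2 ∈ evalPattern G P2,
        Mapping.compatible μ1 μ2 ∧ μ = Mapping.union μ1 μ2} ∪
      {μ1 | μ1 ∈ evalPattern G P1 ∧
        ∀ μ2 ∈ evalPattern G P2, ¬ Mapping.compatible μ1 μ2}

/-- Well-designedness, via the outer-variable characterization: a pattern is
well-designed iff for each subpattern (P1 OPT P2), reached in a context in which O is
the set of variables occurring outside of the subpattern, every variable of P2 that
occurs outside (i.e. belongs to O) also occurs in P1. -/
def wdAux : Pattern → Set ℕ → Prop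
  | .bgp _, _ => True
  | .and P1 P2, O => wdAux P1 (O ∪ P2.vars) ∧ wdAux P2 (O ∪ P1.vars)
  | .opt P1 P2, O => wdAux P1 (O ∪ P2.vars) ∧ wdAux P2 (O ∪ P1.vars) ∧
      ∀ x ∈ P2.vars, x ∈ O → x ∈ P1.vars

def wellDesigned (P : Pattern) : Prop := wdAux P ∅

/-! ### Auxiliary lemmas -/

lemma Mapping.mem_dom {μ : Mapping} {x : ℕ} : x ∈ μ.dom ↔ (μ x).isSome := Iff.rfl

lemma Mapping.union_apply_left {μ1 μ2 : Mapping} {x : ℕ} (h : x ∈ μ1.dom) :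
    μ1.union μ2 x = μ1 x := by
  rw [Mapping.mem_dom, Option.isSome_iff_exists] at h
  obtain ⟨v, hv⟩ := h
  simp [Mapping.union, hv]

lemma Mapping.union_apply_right {μ1 μ2 : Mapping} {x : ℕ} (h : x ∉ μ1.dom) :
    μ1.union μ2 x = μ2 x := by
  rw [Mapping.mem_dom, Option.not_isSome_iff_eq_none] at h
  simp [Mapping.union, h]

lemma Mapping.dom_union (μ1 μ2 : Mapping) : (μ1.union μ2).dom = μ1.dom ∪ μ2.dom := by
  ext x
  by_cases h : x ∈ μ1.dom
  · simp only [Set.mem_union, Mapping.mem_dom, Mapping.union_apply_left h]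
    exact ⟨fun h' => Or.inl h', fun _ => h⟩
  · simp only [Set.mem_union, Mapping.mem_dom, Mapping.union_apply_right h]
    rw [Mapping.mem_dom, Option.not_isSome_iff_eq_none] at h
    simp [h]

lemma Mapping.union_assoc (μ1 μ2 μ3 : Mapping) :
    (μ1.union μ2).union μ3 = μ1.union (μ2.union μ3) := by
  funext x
  simp only [Mapping.union]
  cases μ1 x <;> cases μ2 x <;> simp [Option.orElse]

lemma Mapping.compatible.symm {μ1 μ2 : Mapping} (h : μ1.compatible μ2) :
    μ2.compatible μ1 := fun x hx => (h x ⟨hx.2, hx.1⟩).symm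

/-- Compatibility with a union on the left. -/
lemma Mapping.compatible_union_left_iff {μ1 μ2 μ3 : Mapping} (h12 : μ1.compatible μ2) :
    (μ1.union μ2).compatible μ3 ↔ μ1.compatible μ3 ∧ μ2.compatible μ3 := by
  constructor
  · intro h
    constructor
    · intro x hx
      have hx1 : x ∈ (μ1.union μ2).dom := by rw [Mapping.dom_union]; exact Or.inl hx.1
      have := h x ⟨hx1, hx.2⟩
      rwa [Mapping.union_apply_left hx.1] at this
    · intro x hx
      have hx1 : x ∈ (μ1.union μ2).dom := by rw [Mapping.dom_union]; exact Or.inr hx.1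
      have hu := h x ⟨hx1, hx.2⟩
      by_cases h1 : x ∈ μ1.dom
      · rw [Mapping.union_apply_left h1] at hu
        rw [← h12 x ⟨h1, hx.1⟩]; exact hu
      · rwa [Mapping.union_apply_right h1] at hu
  · rintro ⟨h13, h23⟩ x hx
    rw [Mapping.dom_union] at hx
    by_cases h1 : x ∈ μ1.dom
    · rw [Mapping.union_apply_left h1]; exact h13 x ⟨h1, hx.2⟩
    · rw [Mapping.union_apply_right h1]
      rcases hx.1 with h | h
      · exact absurd h h1
      · exact h23 x ⟨h, hx.2⟩

/-- Compatibility with a union on the right. -/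
lemma Mapping.compatible_union_right_iff {μ1 μ2 μ3 : Mapping} (h23 : μ2.compatible μ3) :
    μ1.compatible (μ2.union μ3) ↔ μ1.compatible μ2 ∧ μ1.compatible μ3 := by
  constructor
  · intro h
    have := (Mapping.compatible_union_left_iff h23).mp h.symm
    exact ⟨this.1.symm, this.2.symm⟩
  · rintro ⟨h12, h13⟩
    exact ((Mapping.compatible_union_left_iff h23).mpr ⟨h12.symm, h13.symm⟩).symm

/-- Certain variables of a pattern: variables bound by every solution mapping. -/
def cvars : Pattern → Set ℕ
  | .bgp Q => bgpVars Q
  | .and P1 P2 => cvars P1 ∪ cvars P2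
  | .opt P1 _ => cvars P1

/-- The domain of a solution mapping is contained in the variables of the pattern. -/
lemma dom_subset_vars {G : Set GroundAtom} :
    ∀ (P : Pattern) (μ : Mapping), μ ∈ evalPattern G P → μ.dom ⊆ P.vars := by
  intro P
  induction P with
  | bgp Q => intro μ hμ; rw [hμ.1]; exact subset_rfl
  | and P1 P2 ih1 ih2 =>
    rintro μ ⟨μ1, h1, μ2, h2, _, rfl⟩
    rw [Mapping.dom_union]
    exact Set.union_subset_union (ih1 μ1 h1) (ih2 μ2 h2)
  | opt P1 P2 ih1 ih2 =>
    rintro μ hμ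
    rcases hμ with ⟨μ1, h1, μ2, h2, _, rfl⟩ | ⟨h1, _⟩
    · rw [Mapping.dom_union]
      exact Set.union_subset_union (ih1 μ1 h1) (ih2 μ2 h2)
    · exact (ih1 μ h1).trans Set.subset_union_left

/-- Every solution mapping binds all certain variables. -/
lemma cvars_subset_dom {G : Set GroundAtom} :
    ∀ (P : Pattern) (μ : Mapping), μ ∈ evalPattern G P → cvars P ⊆ μ.dom := by
  intro P
  induction P with
  | bgp Q => intro μ hμ; rw [hμ.1]; exact subset_rfl
  | and P1 P2 ih1 ih2 =>
    rintro μ ⟨μ1, h1, μ2, h2, _, rfl⟩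
    rw [Mapping.dom_union]
    exact Set.union_subset_union (ih1 μ1 h1) (ih2 μ2 h2)
  | opt P1 P2 ih1 ih2 =>
    rintro μ hμ
    rcases hμ with ⟨μ1, h1, μ2, h2, _, rfl⟩ | ⟨h1, _⟩
    · rw [Mapping.dom_union]
      exact (ih1 μ1 h1).trans Set.subset_union_left
    · exact ih1 μ h1

/-- In a well-designed context, every variable of the pattern that also occurs
outside is a certain variable. -/
lemma wd_outer_mem_cvars :
    ∀ (P : Pattern) (O : Set ℕ), wdAux P O → ∀ x ∈ P.vars, x ∈ O → x ∈ cvars P := by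
  intro P
  induction P with
  | bgp Q => intro O _ x hx _; exact hx
  | and P1 P2 ih1 ih2 =>
    rintro O ⟨h1, h2⟩ x hx hO
    rcases hx with hx | hx
    · exact Or.inl (ih1 (O ∪ P2.vars) h1 x hx (Or.inl hO))
    · exact Or.inr (ih2 (O ∪ P1.vars) h2 x hx (Or.inl hO))
  | opt P1 P2 ih1 ih2 =>
    rintro O ⟨h1, h2, h3⟩ x hx hO
    rcases hx with hx | hx
    · exact ih1 (O ∪ P2.vars) h1 x hx (Or.inl hO)
    · exact ih1 (O ∪ P2.vars) h1 x (h3 x hx hO) (Or.inl hO)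

/-- If P ∧ (Q OPT R) is well-designed, then for every RDF graph G,
⟦P ∧ (Q OPT R)⟧_G = ⟦(P ∧ Q) OPT R⟧_G. -/
theorem and_opt_normalization (P Q R : Pattern)
    (hwd : wellDesigned (Pattern.and P (Pattern.opt Q R)))
    (G : Set GroundAtom) :
    evalPattern G (Pattern.and P (Pattern.opt Q R)) =
      evalPattern G (Pattern.opt (Pattern.and P Q) R) := by
  -- Unpack well-designedness
  obtain ⟨-, hwQ, -, hkey⟩ :
      wdAux P (∅ ∪ (Pattern.opt Q R).vars) ∧
      wdAux Q ((∅ ∪ P.vars) ∪ R.vars) ∧ wdAux R ((∅ ∪ P.vars) ∪ Q.vars) ∧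
      ∀ x ∈ R.vars, x ∈ (∅ : Set ℕ) ∪ P.vars → x ∈ Q.vars := hwd
  -- Key compatibility lemma, using well-designedness.
  have key : ∀ μP ∈ evalPattern G P, ∀ μQ ∈ evalPattern G Q, ∀ μR ∈ evalPattern G R,
      μP.compatible μQ → μQ.compatible μR → μP.compatible μR := by
    intro μP hP μQ hQ μR hR hPQ hQR x hx
    have hxP : x ∈ P.vars := dom_subset_vars P μP hP hx.1
    have hxR : x ∈ R.vars := dom_subset_vars R μR hR hx.2
    have hxQ : x ∈ Q.vars := hkey x hxR (Or.inr hxP)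
    have hxQd : x ∈ μQ.dom :=
      cvars_subset_dom Q μQ hQ
        (wd_outer_mem_cvars Q _ hwQ x hxQ (Or.inl (Or.inr hxP)))
    calc μP x = μQ x := hPQ x ⟨hx.1, hxQd⟩
      _ = μR x := hQR x ⟨hxQd, hx.2⟩
  ext μ
  constructor
  · rintro ⟨μP, hP, ν, hν, hcomp, rfl⟩
    rcases hν with ⟨μQ, hQ, μR, hR, hQR, rfl⟩ | ⟨hQ, hnone⟩
    · -- ν = μQ ∪ μR
      obtain ⟨hPQ, hPR⟩ := (Mapping.compatible_union_right_iff hQR).mp hcomp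
      refine Or.inl ⟨μP.union μQ, ⟨μP, hP, μQ, hQ, hPQ, rfl⟩, μR, hR, ?_, ?_⟩
      · exact (Mapping.compatible_union_left_iff hPQ).mpr ⟨hPR, hQR⟩
      · exact (Mapping.union_assoc μP μQ μR).symm
    · -- ν = μQ with no compatible solution of R
      refine Or.inr ⟨⟨μP, hP, ν, hQ, hcomp, rfl⟩, ?_⟩
      intro μR hR hc
      exact hnone μR hR ((Mapping.compatible_union_left_iff hcomp).mp hc).2
  · rintro (⟨μ12, ⟨μP, hP, μQ, hQ, hPQ, rfl⟩, μR, hR, hcomp, rfl⟩ | ⟨⟨μP, hP, μQ, hQ, hPQ, rfl⟩, hnone⟩)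
    · -- μ = (μP ∪ μQ) ∪ μR
      obtain ⟨hPR, hQR⟩ := (Mapping.compatible_union_left_iff hPQ).mp hcomp
      refine ⟨μP, hP, μQ.union μR, Or.inl ⟨μQ, hQ, μR, hR, hQR, rfl⟩, ?_,
        Mapping.union_assoc μP μQ μR⟩
      exact (Mapping.compatible_union_right_iff hQR).mpr ⟨hPQ, hPR⟩
    · -- μ = μP ∪ μQ with no solution of R compatible with it
      refine ⟨μP, hP, μQ, Or.inr ⟨hQ, ?_⟩, hPQ, rfl⟩
      intro μR hR hQR
      exact hnone μR hR
        ((Mapping.compatible_union_left_iff hPQ).mpr ⟨key μP hP μQ hQ μR hR hPQ hQR, hQR⟩)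
end

section
/- Let P, P_1, …, P_k be BGPs such that each P_i contains at least one variable not occurring in vars(P), and let Q be the OPT-chain pattern ((…((P OPT P_1) OPT P_2) …) OPT P_k). Then for every RDF graph G and every mapping μ with dom(μ) = vars(P): μ ∈ ⟦Q⟧_G if and only if μ ∈ ⟦P⟧_G and, for every i ∈ {1,…,k}, no mapping μ_i ∈ ⟦P_i⟧_G is compatible with μ (i.e., μ cannot be extended to an answer of any P_i over G). -/
/-- For an OPT-chain Q = ((…((P OPT P₁) OPT P₂) …) OPT P_k) of BGPs such that each Pᵢ
contains a variable not occurring in vars(P), and every mapping μ with dom(μ) = vars(P):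
μ ∈ ⟦Q⟧_G iff μ ∈ ⟦P⟧_G and no answer of any Pᵢ over G is compatible with μ. -/
theorem optChain_answer_iff (P : List BAtom) (Ps : List (List BAtom))
    (hfresh : ∀ Pi ∈ Ps, ∃ x ∈ bgpVars Pi, x ∉ bgpVars P)
    (G : Set GroundAtom) (μ : Mapping) (hdom : μ.dom = bgpVars P) :
    μ ∈ evalPattern G ((Ps.map Pattern.bgp).foldl Pattern.opt (Pattern.bgp P)) ↔
      (μ ∈ evalBGP P G ∧
        ∀ Pi ∈ Ps, ∀ μi ∈ evalBGP Pi G, ¬ Mapping.compatible μ μi) := by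
  induction Ps using List.reverseRecOn with
  | nil => simp [evalPattern]
  | append_singleton Ps Pk ih =>
    rw [List.map_append, List.foldl_append]
    simp only [List.map_cons, List.map_nil, List.foldl_cons, List.foldl_nil]
    constructor
    · rintro (⟨μ1, h1, μ2, h2, hc, rfl⟩ | ⟨h1, h2⟩)
      · exfalso
        obtain ⟨x, hx, hxP⟩ := hfresh Pk (by simp)
        have hx2 : x ∈ μ2.dom := by
          have h2' : μ2.dom = bgpVars Pk := h2.1
          rw [h2']; exact hx
        have hxu : x ∈ (Mapping.union μ1 μ2).dom := by
          simp only [Mapping.dom, Mapping.union, Set.mem_setOf_eq] at hx2 ⊢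
          cases hm : μ1 x <;> simp [Option.orElse, hm, hx2]
        rw [hdom] at hxu
        exact hxP hxu
      · have := (ih (fun Pi hPi => hfresh Pi (by simp [hPi]))).mp h1
        refine ⟨this.1, fun Pi hPi μi hμi => ?_⟩
        rcases List.mem_append.mp hPi with h | h
        · exact this.2 Pi h μi hμi
        · simp only [List.mem_singleton] at h
          subst h
          exact h2 μi hμi
    · rintro ⟨hP, hno⟩
      right
      refine ⟨(ih (fun Pi hPi => hfresh Pi (by simp [hPi]))).mpr
        ⟨hP, fun Pi hPi μi hμi => hno Pi (by simp [hPi]) μi hμi⟩, ?_⟩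
      exact fun μ2 h2 => hno Pk (by simp) μ2 h2
end

section
/- Let P, P_1, …, P_k be BGPs, let X be a set of variables such that for every i, vars(P_i) ⊆ X and P_i contains at least one variable from X ∖ vars(P), and let Q be the OPT-chain pattern ((…((P OPT P_1) OPT P_2) …) OPT P_k). Then for every RDF graph G and every mapping μ with dom(μ) = vars(P) ∩ X: μ ∈ ⟦π_X Q⟧_G if and only if there exists a mapping ν ∈ ⟦P⟧_G with ν|_X = μ such that, for every i ∈ {1,…,k}, no mapping μ_i ∈ ⟦P_i⟧_G is compatible with ν. (This is the paper's characterization: μ is an answer to π_X Q iff there exists an extension ν of μ to vars(P) such that there does not exist an extension of ν to an answer of one of the queries P_i.) -/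
open Classical in
/-- Restriction μ|_X of a mapping to a set X of variables. -/
noncomputable def Mapping.restrict (μ : Mapping) (X : Set ℕ) : Mapping :=
  fun x => if x ∈ X then μ x else none

/-- ⟦π_X Q⟧_G for a BGP Q with projection to the variables in X. -/
def evalProjBGP (X : Set ℕ) (Q : List BAtom) (G : Set GroundAtom) : Set Mapping :=
  {ν | ∃ μ ∈ evalBGP Q G, Mapping.restrict μ X = ν}

/-- ⟦π_X Q⟧_G for a graph pattern Q with projection to the variables in X. -/
def evalProjPattern (X : Set ℕ) (P : Pattern) (G : Set GroundAtom) : Set Mapping :=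
  {ν | ∃ μ ∈ evalPattern G P, Mapping.restrict μ X = ν}

lemma chain_mem (P : List BAtom) (G : Set GroundAtom) (ν : Mapping)
    (hν : ν ∈ evalBGP P G) :
    ∀ Ps : List (List BAtom),
    (∀ Pi ∈ Ps, ∀ μi ∈ evalBGP Pi G, ¬ Mapping.compatible ν μi) →
    ν ∈ evalPattern G ((Ps.map Pattern.bgp).foldl Pattern.opt (Pattern.bgp P)) := by
  intro Ps
  induction Ps using List.reverseRecOn with
  | nil => intro _; exact hν
  | append_singleton l Pk ih =>
    intro hinc
    simp only [List.map_append, List.foldl_append, List.map_cons, List.map_nil,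
      List.foldl_cons, List.foldl_nil]
    refine Set.mem_union_right _ ⟨ih (fun Pi hPi => hinc Pi (by simp [hPi])), ?_⟩
    intro μ2 hμ2
    exact hinc Pk (by simp) μ2 hμ2

lemma chain_elim (P : List BAtom) (X : Set ℕ) (G : Set GroundAtom) (μ : Mapping)
    (hdom : μ.dom = bgpVars P ∩ X) :
    ∀ Ps : List (List BAtom),
    (∀ Pi ∈ Ps, ∃ x ∈ bgpVars Pi, x ∈ X \ bgpVars P) →
    ∀ κ ∈ evalPattern G ((Ps.map Pattern.bgp).foldl Pattern.opt (Pattern.bgp P)),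
    Mapping.restrict κ X = μ →
    κ ∈ evalBGP P G ∧ ∀ Pi ∈ Ps, ∀ μi ∈ evalBGP Pi G, ¬ Mapping.compatible κ μi := by
  intro Ps
  induction Ps using List.reverseRecOn with
  | nil => intro _ κ hκ _; exact ⟨hκ, by simp⟩
  | append_singleton l Pk ih =>
    intro hfresh κ hκ hres
    simp only [List.map_append, List.foldl_append, List.map_cons, List.map_nil,
      List.foldl_cons, List.foldl_nil] at hκ
    obtain h | h := hκ
    · -- union branch: contradiction via the fresh variable
      obtain ⟨μ1, _, μ2, hμ2, _, rfl⟩ := h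
      obtain ⟨x, hxPk, hxX, hxP⟩ := hfresh Pk (by simp)
      exfalso
      have hμ2x : (μ2 x).isSome := by
        have : x ∈ μ2.dom := by rw [hμ2.1]; exact hxPk
        exact this
      have hκx : ((Mapping.union μ1 μ2) x).isSome := by
        unfold Mapping.union
        cases h1 : μ1 x with
        | none => simpa [Option.orElse, h1] using hμ2x
        | some a => simp [Option.orElse, h1]
      have hμx : (μ x).isSome := by
        rw [← hres]
        simpa [Mapping.restrict, hxX] using hκx
      have : x ∈ μ.dom := hμx
      rw [hdom] at this
      exact hxP this.1
    · obtain ⟨hκl, hinc⟩ := h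
      obtain ⟨hP, hl⟩ := ih (fun Pi hPi => hfresh Pi (by simp [hPi])) κ hκl hres
      refine ⟨hP, ?_⟩
      intro Pi hPi μi hμi
      rcases List.mem_append.mp hPi with h' | h'
      · exact hl Pi h' μi hμi
      · obtain rfl := List.mem_singleton.mp h'
        exact fun hc => hinc μi hμi hc

/-- For an OPT-chain Q = ((…((P OPT P₁) OPT P₂) …) OPT P_k) of BGPs where each
vars(Pᵢ) ⊆ X and each Pᵢ contains a variable from X ∖ vars(P), and every mapping μ with
dom(μ) = vars(P) ∩ X: μ ∈ ⟦π_X Q⟧_G iff there is an extension ν ∈ ⟦P⟧_G of μ (with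
ν|_X = μ) such that no answer of any Pᵢ over G is compatible with ν. -/
theorem projected_optChain_answer_iff (P : List BAtom) (Ps : List (List BAtom))
    (X : Set ℕ)
    (hsub : ∀ Pi ∈ Ps, bgpVars Pi ⊆ X)
    (hfresh : ∀ Pi ∈ Ps, ∃ x ∈ bgpVars Pi, x ∈ X \ bgpVars P)
    (G : Set GroundAtom) (μ : Mapping) (hdom : μ.dom = bgpVars P ∩ X) :
    μ ∈ evalProjPattern X ((Ps.map Pattern.bgp).foldl Pattern.opt (Pattern.bgp P)) G ↔
      ∃ ν ∈ evalBGP P G, Mapping.restrict ν X = μ ∧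
        ∀ Pi ∈ Ps, ∀ μi ∈ evalBGP Pi G, ¬ Mapping.compatible ν μi := by
  constructor
  · rintro ⟨κ, hκ, hres⟩
    obtain ⟨hP, hinc⟩ := chain_elim P X G μ hdom Ps hfresh κ hκ hres
    exact ⟨κ, hP, hres, hinc⟩
  · rintro ⟨ν, hν, hres, hinc⟩
    exact ⟨ν, chain_mem P G ν hν Ps hinc, hres⟩
end

section
/- Let U be a finite set with |U| = S, let F be a nonempty family of subsets of U, and let K = |⋂_{A∈F} A|. Then there exist (not necessarily distinct) sets A_1, …, A_{S−K+1} ∈ F such that A_1 ∩ ⋯ ∩ A_{S−K+1} = ⋂_{A∈F} A. (This is the witnessing lemma behind the paper's guess-and-check algorithms for IAR semantics: the intersection of all repaired graphs, which are subsets of G ∪ H, is already realized as the intersection of S − K + 1 of them.) -/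
/-!
Fix `A₀ ∈ F`. Every `x ∈ A₀ \ ⋂₀ F` is missed by some member of `F`; together with `A₀` these
witnesses already cut out `⋂₀ F`, and there are at most `|U \ ⋂₀ F| + 1 = S - K + 1` of them.
Repeating one of them pads the list to length exactly `S - K + 1`.
-/

open Set Function

theorem Set.Finite.exists_fin_range_eq {β : Type*} {s : Set β} (hs : s.Finite) (hne : s.Nonempty)
    {n : ℕ} (hn : s.ncard ≤ n) : ∃ f : Fin n → β, range f = s := by
  have := hs.fintype
  have : Nonempty s := hne.to_subtype
  obtain ⟨e⟩ : Nonempty (s ↪ Fin n) := Function.Embedding.nonempty_of_card_le <| by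
    rwa [Fintype.card_fin, ← Nat.card_eq_fintype_card, Nat.card_coe_set_eq]
  refine ⟨(↑) ∘ invFun e, ?_⟩
  rw [range_comp, (invFun_surjective e.injective).range_eq, image_univ, Subtype.range_coe]

theorem exists_finite_subfamily_sInter_eq {α : Type*} {F : Set (Set α)} {A₀ : Set α}
    (hA₀ : A₀ ∈ F) (hfin : A₀.Finite) :
    ∃ G ⊆ F, G.Finite ∧ G.Nonempty ∧ G.ncard ≤ (A₀ \ ⋂₀ F).ncard + 1 ∧ ⋂₀ G = ⋂₀ F := by
  have hwit : ∀ x ∈ A₀ \ ⋂₀ F, ∃ A ∈ F, x ∉ A := fun x hx => by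
    simpa only [mem_sInter, not_forall, exists_prop] using hx.2
  choose! g hgF hgx using hwit
  have hT : (A₀ \ ⋂₀ F).Finite := hfin.sdiff
  have hGF : insert A₀ (g '' (A₀ \ ⋂₀ F)) ⊆ F := insert_subset hA₀ (image_subset_iff.2 hgF)
  refine ⟨_, hGF, (hT.image g).insert A₀, insert_nonempty _ _,
    (ncard_insert_le _ _).trans (Nat.add_le_add_right (ncard_image_le hT) 1),
    (sInter_subset_sInter hGF).antisymm' fun x hx => ?_⟩
  by_contra hxF
  have hxT : x ∈ A₀ \ ⋂₀ F := ⟨hx A₀ (mem_insert _ _), hxF⟩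
  exact hgx x hxT (hx _ (mem_insert_of_mem _ (mem_image_of_mem g hxT)))

/-- Witnessing lemma for intersections of families of subsets of a finite set:
if |U| = S, F is a nonempty family of subsets of U, and the intersection of all
members of F has cardinality K, then some S − K + 1 (not necessarily distinct)
members of F already realize the full intersection. -/
theorem intersection_realized_by_few_witnesses
    {α : Type*} (U : Set α) (hU : U.Finite) (S : ℕ) (hS : U.ncard = S)
    (F : Set (Set α)) (hne : F.Nonempty) (hsub : ∀ A ∈ F, A ⊆ U)
    (K : ℕ) (hK : (⋂₀ F).ncard = K) :
    ∃ f : Fin (S - K + 1) → Set α,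
      (∀ i, f i ∈ F) ∧ (⋂ i, f i) = ⋂₀ F := by
  obtain ⟨A₀, hA₀⟩ := hne
  have hA₀U : A₀ ⊆ U := hsub A₀ hA₀
  obtain ⟨G, hGF, hGfin, hGne, hGcard, hGI⟩ :=
    exists_finite_subfamily_sInter_eq hA₀ (hU.subset hA₀U)
  have hcard : (A₀ \ ⋂₀ F).ncard ≤ S - K := by
    rw [← hS, ← hK, ← ncard_sdiff' ((sInter_subset_of_mem hA₀).trans hA₀U) hU]
    exact ncard_le_ncard (sdiff_subset_sdiff_left hA₀U) hU.sdiff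
  obtain ⟨f, hf⟩ := hGfin.exists_fin_range_eq (n := S - K + 1) hGne (by omega)
  exact ⟨f, fun i => hGF (hf ▸ mem_range_self i), by rw [← sInter_range, hf, hGI]⟩
end

section
/- Let U be a finite set of ground atoms, let F be a nonempty family of subsets of U, let π_X Q be a projected BGP, and let μ be a mapping. Then μ ∉ ⟦π_X Q⟧_{⋂_{A∈F} A} if and only if there exists a set G' ⊆ U such that μ ∉ ⟦π_X Q⟧_{G'} and for every atom α ∈ U ∖ G' there is some A ∈ F with α ∉ A. (This is the correctness of the paper's coNP algorithm for IAR semantics with projected BGPs: one guesses a superset G' of the intersection together with, for each excluded atom, a member of the family excluding it.) -/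
theorem evalProjBGP_mono {G G' : Set GroundAtom} (h : G ⊆ G') {X Q μ}
    (hm : μ ∈ evalProjBGP X Q G) : μ ∈ evalProjBGP X Q G' := by
  obtain ⟨ν, ⟨hdom, hall⟩, hres⟩ := hm
  exact ⟨ν, ⟨hdom, fun ψ hψ => by obtain ⟨a, haG, he⟩ := hall ψ hψ; exact ⟨a, h haG, he⟩⟩, hres⟩

/-- Correctness of the coNP algorithm for IAR semantics with projected BGPs: μ is not
an answer of π_X Q over the intersection of a nonempty family F of subsets of a finite
set U of ground atoms iff there is a set G' ⊆ U with μ not an answer of π_X Q over G'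
such that every atom of U ∖ G' is excluded by some member of F. -/
theorem not_answer_intersection_iff_superset_witness
    (U : Set GroundAtom) (hU : U.Finite)
    (F : Set (Set GroundAtom)) (hne : F.Nonempty) (hsub : ∀ A ∈ F, A ⊆ U)
    (Q : List BAtom) (X : Set ℕ) (μ : Mapping) :
    μ ∉ evalProjBGP X Q (⋂₀ F) ↔
      ∃ G' ⊆ U, μ ∉ evalProjBGP X Q G' ∧ ∀ a ∈ U \ G', ∃ A ∈ F, a ∉ A := by
  constructor
  · intro h
    refine ⟨⋂₀ F, ?_, h, ?_⟩
    · obtain ⟨A, hA⟩ := hne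
      exact (Set.sInter_subset_of_mem hA).trans (hsub A hA)
    · intro a ha
      rcases ha with ⟨_, hnot⟩
      by_contra hc
      push_neg at hc
      exact hnot (Set.mem_sInter.2 hc)
  · rintro ⟨G', hG'U, hnot, hexc⟩ hmem
    apply hnot
    have hsubInt : ⋂₀ F ⊆ G' := by
      intro a ha
      by_contra haG
      obtain ⟨A, hAF⟩ := hne
      have haU : a ∈ U := hsub A hAF (ha A hAF)
      obtain ⟨B, hBF, hB⟩ := hexc a ⟨haU, haG⟩
      exact hB (ha B hBF)
    exact evalProjBGP_mono hsubInt hmem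
end

section
/- Let n ≥ 1, let f : (Fin n → Bool) → Bool be any Boolean function (representing a propositional formula φ over variables x_1, …, x_n), and define g : (Fin (n+1) → Bool) → Bool by g(α) = true iff f(α restricted to the first n coordinates) = true, or (α assigns false to the first coordinate and true to all of the remaining n coordinates). Then there exists a cardinality-minimal model α of g with α(first coordinate) = true if and only if there exists a cardinality-minimal model β of f with β(first coordinate) = true. (This is the key step in the paper's proof of Θ2P-hardness of CardMin-Precoloring: passing from φ to ψ = φ ∨ (¬x_1 ∧ x_2 ∧ ⋯ ∧ x_{n+1}) preserves whether x_1 is true in some cardinality-minimal model.) -/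
/-- The weight of a Boolean assignment: the number of coordinates set to true. -/
def weight {m : ℕ} (α : Fin m → Bool) : ℕ :=
  (Finset.univ.filter fun i => α i = true).card

/-- A cardinality-minimal model of a Boolean function: a model of minimal weight. -/
def IsCardMinModel {m : ℕ} (h : (Fin m → Bool) → Bool) (α : Fin m → Bool) : Prop :=
  h α = true ∧ ∀ β, h β = true → weight α ≤ weight β

lemma weight_eq_sum {m : ℕ} (α : Fin m → Bool) :
    weight α = ∑ i, if α i = true then 1 else 0 := by
  unfold weight; rw [Finset.card_filter]

lemma weight_snoc (n : ℕ) (β : Fin n → Bool) :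
    weight (Fin.snoc β false : Fin (n + 1) → Bool) = weight β := by
  rw [weight_eq_sum, weight_eq_sum, Fin.sum_univ_castSucc]
  simp

lemma weight_restrict_le (n : ℕ) (α : Fin (n + 1) → Bool) :
    weight (fun i => α (Fin.castSucc i)) ≤ weight α := by
  rw [weight_eq_sum, weight_eq_sum α, Fin.sum_univ_castSucc]
  simp

lemma weight_le (m : ℕ) (β : Fin m → Bool) : weight β ≤ m := by
  simpa [weight] using (Finset.card_filter_le Finset.univ fun i => β i = true)

/-- Passing from φ to ψ = φ ∨ (¬x₁ ∧ x₂ ∧ ⋯ ∧ x_{n+1}) preserves whether x₁ is true in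
some cardinality-minimal model: g has a cardinality-minimal model setting the first
coordinate to true iff f does. -/
theorem cardMin_first_var_preserved
    (n : ℕ) (hn : 1 ≤ n) (f : (Fin n → Bool) → Bool)
    (g : (Fin (n + 1) → Bool) → Bool)
    (hg : ∀ α : Fin (n + 1) → Bool,
      g α = true ↔
        (f (fun i => α (Fin.castSucc i)) = true ∨
          (α 0 = false ∧ ∀ i : Fin (n + 1), i ≠ 0 → α i = true))) :
    (∃ α : Fin (n + 1) → Bool, IsCardMinModel g α ∧ α 0 = true) ↔
      (∃ β : Fin n → Bool, IsCardMinModel f β ∧ β ⟨0, hn⟩ = true) := by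
  have e0 : Fin.castSucc (⟨0, hn⟩ : Fin n) = (0 : Fin (n + 1)) := Fin.ext (by simp)
  constructor
  · rintro ⟨α, ⟨hα, hmin⟩, h0⟩
    refine ⟨fun i => α (Fin.castSucc i), ⟨?_, ?_⟩, ?_⟩
    · rcases (hg α).mp hα with h | ⟨hf, _⟩
      · exact h
      · rw [h0] at hf; exact absurd hf (by simp)
    · intro β hβ
      have hg' : g (Fin.snoc β false) = true := by
        rw [hg]; left
        simpa [Fin.snoc_castSucc] using hβ
      calc weight (fun i => α (Fin.castSucc i)) ≤ weight α := weight_restrict_le n α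
        _ ≤ weight (Fin.snoc β false) := hmin _ hg'
        _ = weight β := weight_snoc n β
    · show α (Fin.castSucc ⟨0, hn⟩) = true
      rw [e0]; exact h0
  · rintro ⟨β, ⟨hβ, hmin⟩, h0⟩
    refine ⟨Fin.snoc β false, ⟨?_, ?_⟩, ?_⟩
    · rw [hg]; left
      simpa [Fin.snoc_castSucc] using hβ
    · intro γ hγ
      rw [weight_snoc]
      rcases (hg γ).mp hγ with h | ⟨-, hall⟩
      · exact le_trans (hmin _ h) (weight_restrict_le n γ)
      · refine le_trans (weight_le n β) ?_
        have hsub : (Finset.univ.erase (0 : Fin (n + 1))) ⊆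
            Finset.univ.filter (fun i => γ i = true) := by
          intro i hi
          simp only [Finset.mem_erase, Finset.mem_univ, and_true] at hi
          simp [hall i hi]
        have hc := Finset.card_le_card hsub
        simpa [weight, Finset.card_erase_of_mem] using hc
    · show (Fin.snoc β false : Fin (n + 1) → Bool) 0 = true
      rw [← e0, Fin.snoc_castSucc]; exact h0
end

section
/- Let G be a simple graph containing distinct vertices v, v', v'', v''' such that {v,v'}, {v,v''}, {v',v''}, {v',v'''}, {v'',v'''} are all edges of G. Then every proper 3-coloring c of G satisfies c(v) = c(v''') and the colors c(v'), c(v''), c(v''') are pairwise distinct (so each of the three colors is used exactly once among v', v'', v'''). (This is the degree-reduction gadget in the paper's proof of Lemma 1: splitting a high-degree vertex v into v and v''' via two overlapping triangles preserves the color of v and uses each color, in particular the distinguished color g, exactly once among the new vertices.) -/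
lemma three_colors {C : Type*} [Fintype C] (hC : Fintype.card C = 3)
    {a b x : C} (hab : a ≠ b) (hax : a ≠ x) (hbx : b ≠ x) (y : C) :
    y = a ∨ y = b ∨ y = x := by
  classical
  have hcard : ({a, b, x} : Finset C).card = 3 := by
    rw [Finset.card_insert_of_notMem (by simp [hab, hax]),
        Finset.card_insert_of_notMem (by simp [hbx])]
    simp
  have : ({a, b, x} : Finset C) = Finset.univ :=
    Finset.eq_univ_of_card _ (by rw [hcard, hC])
  have hy : y ∈ ({a, b, x} : Finset C) := this ▸ Finset.mem_univ y
  simpa using hy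

/-- The degree-reduction gadget: if v, v', v'', v''' are distinct vertices with edges
{v,v'}, {v,v''}, {v',v''}, {v',v'''}, {v'',v'''} (two overlapping triangles), then every
proper 3-coloring c satisfies c(v) = c(v''') and colors v', v'', v''' pairwise
differently (so each of the three colors is used exactly once among v', v'', v'''). -/
theorem two_triangle_gadget
    {V C : Type*} [Fintype C] (hC : Fintype.card C = 3)
    (G : SimpleGraph V) (v v' v'' v''' : V)
    (hne : List.Pairwise (· ≠ ·) [v, v', v'', v'''])
    (h1 : G.Adj v v') (h2 : G.Adj v v'') (h3 : G.Adj v' v'')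
    (h4 : G.Adj v' v''') (h5 : G.Adj v'' v''')
    (c : V → C) (hc : ∀ u w, G.Adj u w → c u ≠ c w) :
    c v = c v''' ∧ c v' ≠ c v'' ∧ c v' ≠ c v''' ∧ c v'' ≠ c v''' := by
  have hab := hc _ _ h3
  have hv1 := hc _ _ h1
  have hv2 := hc _ _ h2
  have hw1 := hc _ _ h4
  have hw2 := hc _ _ h5
  refine ⟨?_, hab, hw1, hw2⟩
  rcases three_colors hC hab (Ne.symm hv1) (Ne.symm hv2) (c v''') with h | h | h
  · exact absurd h.symm hw1
  · exact absurd h.symm hw2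
  · exact h.symm
end

section
/- Let G be a simple graph, let W ⊆ V(G), and let G' be the graph obtained from G by adding, for each v ∈ W, two fresh vertices a_v and b_v together with the edges {v,a_v}, {v,b_v}, {a_v,b_v} (all new vertices distinct from each other and from V(G)). Then: (i) every proper 3-coloring of G extends to a proper 3-coloring of G'; and (ii) for every fixed color g and every proper 3-coloring c of G', the number of vertices of G' colored g equals |W| plus the number of vertices u ∈ V(G) ∖ W with c(u) = g. (This is the triangle gadget in the paper's proof of Lemma 1, which makes the colors of the vertices in W irrelevant to minimizing the use of the color g.) -/
/-- The graph G' obtained from G by adding, for each v ∈ W, two fresh vertices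
a_v = (v, false) and b_v = (v, true) together with the edges {v, a_v}, {v, b_v},
{a_v, b_v}. -/
def addTriangles {V : Type*} (G : SimpleGraph V) (W : Set V) :
    SimpleGraph (V ⊕ (↥W × Bool)) :=
  SimpleGraph.fromRel (fun x y =>
    match x, y with
    | Sum.inl u, Sum.inl w => G.Adj u w
    | Sum.inl u, Sum.inr p => u = (p.1 : V)
    | Sum.inr _, Sum.inl _ => False
    | Sum.inr p, Sum.inr q => p.1 = q.1 ∧ p.2 ≠ q.2)

lemma aux_mem_of_card_three {C : Type*} [Fintype C] [DecidableEq C]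
    (hC : Fintype.card C = 3) (x y z g : C) (hxy : x ≠ y) (hxz : x ≠ z) (hyz : y ≠ z) :
    g = x ∨ g = y ∨ g = z := by
  have hcard : ({x, y, z} : Finset C).card = 3 := by
    rw [Finset.card_insert_of_notMem (by simp [hxy, hxz]),
      Finset.card_insert_of_notMem (by simp [hyz]), Finset.card_singleton]
  have huniv : ({x, y, z} : Finset C) = Finset.univ :=
    Finset.eq_univ_of_card _ (hcard.trans hC.symm)
  have := Finset.mem_univ g
  rw [← huniv] at this
  simpa using this

lemma aux_two_other {C : Type*} [Fintype C] (hC : Fintype.card C = 3) (x : C) :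
    ∃ y z : C, y ≠ x ∧ z ≠ x ∧ y ≠ z := by
  classical
  obtain ⟨y, hy⟩ := Fintype.exists_ne_of_one_lt_card (by omega) x
  have hle : ({x, y} : Finset C).card ≤ 2 :=
    (Finset.card_insert_le x {y}).trans (by simp)
  have hlt : ({x, y} : Finset C).card < (Finset.univ : Finset C).card := by
    rw [Finset.card_univ, hC]; omega
  have hne : ({x, y} : Finset C) ≠ Finset.univ := fun he => absurd (he ▸ hlt) (lt_irrefl _)
  obtain ⟨z, _, hz⟩ := Finset.exists_of_ssubset (Finset.ssubset_univ_iff.mpr hne)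
  simp only [Finset.mem_insert, Finset.mem_singleton, not_or] at hz
  exact ⟨y, z, hy, hz.1, fun h => hz.2 h.symm⟩

/-- The triangle gadget: (i) every proper 3-coloring of G extends to a proper
3-coloring of the extended graph G'; (ii) for every fixed color g and every proper
3-coloring c' of G', the number of vertices of G' colored g equals |W| plus the number
of vertices u ∈ V ∖ W with c'(u) = g. -/
theorem triangle_gadget
    {V C : Type*} [Finite V] [Fintype C] (hC : Fintype.card C = 3)
    (G : SimpleGraph V) (W : Set V) (g : C) :
    ((∀ c : V → C, (∀ u w, G.Adj u w → c u ≠ c w) →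
        ∃ c' : V ⊕ (↥W × Bool) → C,
          (∀ x y, (addTriangles G W).Adj x y → c' x ≠ c' y) ∧
            ∀ u : V, c' (Sum.inl u) = c u) ∧
      ∀ c' : V ⊕ (↥W × Bool) → C,
        (∀ x y, (addTriangles G W).Adj x y → c' x ≠ c' y) →
          {x : V ⊕ (↥W × Bool) | c' x = g}.ncard =
            W.ncard + {u : V | u ∉ W ∧ c' (Sum.inl u) = g}.ncard) := by
  classical
  constructor
  · -- part (i): extension
    intro c hc
    choose f1 f2 hf1 hf2 hf12 using aux_two_other hC
    refine ⟨Sum.elim c (fun p => if p.2 then f1 (c p.1) else f2 (c p.1)), ?_, fun u => rfl⟩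
    intro x y hxy
    rw [addTriangles, SimpleGraph.fromRel_adj] at hxy
    obtain ⟨hne, hrel⟩ := hxy
    rcases x with u | p
    · rcases y with w | q
      · rcases hrel with h | h
        · exact hc u w h
        · exact fun he => hc w u h he.symm
      · obtain ⟨v, b⟩ := q
        have h : u = (v : V) := by
          rcases hrel with h | h
          · exact h
          · exact h.elim
        subst h
        cases b
        · exact fun he => hf2 (c (v : V)) he.symm
        · exact fun he => hf1 (c (v : V)) he.symm
    · rcases y with w | q
      · obtain ⟨v, b⟩ := p
        have h : w = (v : V) := by
          rcases hrel with h | h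
          · exact h.elim
          · exact h
        subst h
        cases b
        · exact fun he => hf2 (c (v : V)) he
        · exact fun he => hf1 (c (v : V)) he
      · obtain ⟨v, b⟩ := p
        obtain ⟨v', b'⟩ := q
        have h : v = v' ∧ b ≠ b' := by
          rcases hrel with ⟨h1, h2⟩ | ⟨h1, h2⟩
          · exact ⟨h1, h2⟩
          · exact ⟨h1.symm, fun he => h2 he.symm⟩
        obtain ⟨h1, h2⟩ := h
        subst h1
        cases b <;> cases b'
        · exact absurd rfl h2
        · exact fun he => hf12 (c (v : V)) he.symm
        · exact fun he => hf12 (c (v : V)) he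
        · exact absurd rfl h2
  · -- part (ii): counting
    intro c' hadj
    have hva : ∀ (v : ↥W) (b : Bool),
        (addTriangles G W).Adj (Sum.inl (v : V)) (Sum.inr (v, b)) := by
      intro v b
      rw [addTriangles, SimpleGraph.fromRel_adj]
      exact ⟨by simp, Or.inl rfl⟩
    have hab : ∀ v : ↥W, (addTriangles G W).Adj (Sum.inr (v, false)) (Sum.inr (v, true)) := by
      intro v
      rw [addTriangles, SimpleGraph.fromRel_adj]
      exact ⟨by simp, Or.inl ⟨rfl, by simp⟩⟩
    have tri : ∀ v : ↥W, c' (Sum.inl (v : V)) = g ∨ c' (Sum.inr (v, false)) = g ∨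
        c' (Sum.inr (v, true)) = g := by
      intro v
      rcases aux_mem_of_card_three hC (c' (Sum.inl (v : V))) (c' (Sum.inr (v, false)))
        (c' (Sum.inr (v, true))) g (hadj _ _ (hva v false)) (hadj _ _ (hva v true))
        (hadj _ _ (hab v)) with h | h | h
      · exact Or.inl h.symm
      · exact Or.inr (Or.inl h.symm)
      · exact Or.inr (Or.inr h.symm)
    set S1 : Set V := {u : V | c' (Sum.inl u) = g} with hS1
    set S2 : Set (↥W × Bool) := {p | c' (Sum.inr p) = g} with hS2
    set SW : Set V := {u : V | u ∈ W ∧ c' (Sum.inl u) = g} with hSW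
    set SN : Set V := {u : V | u ∉ W ∧ c' (Sum.inl u) = g} with hSN
    have hsplit : {x : V ⊕ (↥W × Bool) | c' x = g} = Sum.inl '' S1 ∪ Sum.inr '' S2 := by
      ext x
      rcases x with u | p <;> simp [hS1, hS2]
    have hcard1 : {x : V ⊕ (↥W × Bool) | c' x = g}.ncard = S1.ncard + S2.ncard := by
      rw [hsplit, Set.ncard_union_eq (by
          rw [Set.disjoint_iff_inter_eq_empty]
          ext x
          rcases x with u | p <;> simp)
        (Set.toFinite _) (Set.toFinite _),
        Set.ncard_image_of_injective _ Sum.inl_injective,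
        Set.ncard_image_of_injective _ Sum.inr_injective]
    have hS1split : S1.ncard = SN.ncard + SW.ncard := by
      rw [show S1 = SN ∪ SW by ext u; by_cases h : u ∈ W <;> simp [hS1, hSN, hSW, h]]
      exact Set.ncard_union_eq (by
        rw [Set.disjoint_iff_inter_eq_empty]
        ext u
        simp only [hSN, hSW, Set.mem_inter_iff, Set.mem_setOf_eq, Set.mem_empty_iff_false,
          iff_false, not_and]
        tauto) (Set.toFinite _) (Set.toFinite _)
    have hkey : SW.ncard + S2.ncard = W.ncard := by
      have hfbij : Function.Bijective
          (Sum.elim (fun u : ↥SW => (⟨u.1, u.2.1⟩ : ↥W)) (fun p : ↥S2 => p.1.1)) := by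
        constructor
        · rintro (⟨u, hu⟩ | ⟨⟨v, b⟩, hp⟩) (⟨u', hu'⟩ | ⟨⟨v', b'⟩, hp'⟩) h <;>
            simp only [Sum.elim_inl, Sum.elim_inr, Subtype.mk.injEq] at h
          · exact congrArg Sum.inl (Subtype.ext h)
          · have h' : u = (v' : V) := congrArg Subtype.val h
            exact absurd ((h' ▸ hu.2).trans hp'.symm) (hadj _ _ (hva v' b'))
          · have h' : u' = (v : V) := congrArg Subtype.val h.symm
            exact absurd ((h' ▸ hu'.2).trans hp.symm) (hadj _ _ (hva v b))
          · subst h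
            have hbb : b = b' := by
              by_contra hne
              cases b <;> cases b'
              · exact hne rfl
              · exact hadj _ _ (hab v) (hp.trans hp'.symm)
              · exact hadj _ _ (hab v) (hp'.trans hp.symm)
              · exact hne rfl
            subst hbb
            rfl
        · rintro ⟨v, hv⟩
          rcases tri ⟨v, hv⟩ with h | h | h
          · exact ⟨Sum.inl ⟨v, hv, h⟩, rfl⟩
          · exact ⟨Sum.inr ⟨(⟨v, hv⟩, false), h⟩, rfl⟩
          · exact ⟨Sum.inr ⟨(⟨v, hv⟩, true), h⟩, rfl⟩
      have hn := Nat.card_eq_of_bijective _ hfbij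
      rw [Nat.card_sum] at hn
      rw [← Nat.card_coe_set_eq, ← Nat.card_coe_set_eq, ← Nat.card_coe_set_eq]
      exact hn
    rw [hcard1, hS1split]
    omega
end

section
/- Let H be a finite simple graph with vertex set {v_1, …, v_n}, let r, g, b be three distinct nodes not among the v_i, and let A ⊆ V(H) × {r,g,b}. Let D be the RDF graph consisting of the atoms col(v, c) for every (v,c) ∈ A and neq(c, c') for all distinct c, c' ∈ {r,g,b}. Let Q be the BGP consisting of the atoms col(v_i, x_i) for i = 1,…,n (with pairwise distinct variables x_1,…,x_n) and neq(x_i, x_j) for every edge {v_i, v_j} of H. Then ⟦Q⟧_D is nonempty if and only if there exists a function f : V(H) → {r,g,b} with (v, f(v)) ∈ A for every vertex v and f(u) ≠ f(w) for every edge {u,w} of H; moreover the answers in ⟦Q⟧_D are exactly the mappings x_i ↦ f(v_i) for such f. (This is the correctness of the coloring query used in the paper's reductions for Theorem 2.) -/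
/-- Correctness of the coloring query: for a finite simple graph H on vertices
v 0, …, v (n-1) (pairwise distinct nodes), distinct color nodes r, g, b not among the
vertices, and a precoloring relation A ⊆ V(H) × {r,g,b}, let D be the data graph with
atoms col(vᵢ, c) for (vᵢ, c) ∈ A and neq(c, c') for distinct colors c, c', and let Q be
the BGP with atoms col(vᵢ, xᵢ) (pairwise distinct variables xᵢ) and neq(xᵢ, xⱼ) for
every edge {vᵢ, vⱼ} of H. Then ⟦Q⟧_D is nonempty iff there is a proper coloring
f : V(H) → {r,g,b} adhering to A; moreover the answers in ⟦Q⟧_D are exactly the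
mappings xᵢ ↦ f(vᵢ) for such f. -/
theorem coloring_query_correct
    (n : ℕ) (H : SimpleGraph (Fin n)) [DecidableRel H.Adj]
    (v : Fin n → ℕ) (hv : Function.Injective v)
    (r g b : ℕ) (hrg : r ≠ g) (hrb : r ≠ b) (hgb : g ≠ b)
    (hvr : ∀ i, v i ≠ r) (hvg : ∀ i, v i ≠ g) (hvb : ∀ i, v i ≠ b)
    (A : Set (Fin n × ℕ)) (hA : ∀ p ∈ A, p.2 = r ∨ p.2 = g ∨ p.2 = b)
    (x : Fin n → ℕ) (hx : Function.Injective x)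
    (colP neqP : ℕ) (hcn : colP ≠ neqP)
    (D : Set GroundAtom)
    (hD : D = (fun p : Fin n × ℕ => GroundAtom.prop colP (v p.1) p.2) '' A ∪
      {a | ∃ c ∈ ({r, g, b} : Set ℕ), ∃ c' ∈ ({r, g, b} : Set ℕ),
        c ≠ c' ∧ a = GroundAtom.prop neqP c c'})
    (Q : List BAtom)
    (hQ : Q =
      (List.finRange n).map
        (fun i => BAtom.prop colP (Term.node (v i)) (Term.var (x i))) ++
      (List.finRange n).flatMap (fun i =>
        (List.finRange n).filterMap (fun j =>
          if H.Adj i j then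
            some (BAtom.prop neqP (Term.var (x i)) (Term.var (x j)))
          else none))) :
    ((evalBGP Q D).Nonempty ↔
        ∃ f : Fin n → ℕ, (∀ i, f i = r ∨ f i = g ∨ f i = b) ∧
          (∀ i, (i, f i) ∈ A) ∧ ∀ i j, H.Adj i j → f i ≠ f j) ∧
      evalBGP Q D = {μ : Mapping | ∃ f : Fin n → ℕ,
        (∀ i, f i = r ∨ f i = g ∨ f i = b) ∧
        (∀ i, (i, f i) ∈ A) ∧ (∀ i j, H.Adj i j → f i ≠ f j) ∧
        (∀ i, μ (x i) = some (f i)) ∧ (∀ y : ℕ, (∀ i, x i ≠ y) → μ y = none)} := by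
  classical
  have memQ : ∀ ψ, ψ ∈ Q ↔
      (∃ i, ψ = BAtom.prop colP (Term.node (v i)) (Term.var (x i))) ∨
      (∃ i j, H.Adj i j ∧ ψ = BAtom.prop neqP (Term.var (x i)) (Term.var (x j))) := by
    intro ψ
    rw [hQ]
    simp only [List.mem_append, List.mem_map, List.mem_flatMap, List.mem_filterMap,
      List.mem_finRange, true_and, Option.ite_none_right_eq_some, Option.some.injEq]
    constructor
    · rintro (⟨i, hi⟩ | ⟨i, j, hadj, hj⟩)
      · exact Or.inl ⟨i, hi.symm⟩
      · exact Or.inr ⟨i, j, hadj, hj.symm⟩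
    · rintro (⟨i, hi⟩ | ⟨i, j, hadj, hj⟩)
      · exact Or.inl ⟨i, hi.symm⟩
      · exact Or.inr ⟨i, j, hadj, hj.symm⟩
  have memD : ∀ a, a ∈ D ↔
      (∃ p ∈ A, a = GroundAtom.prop colP (v p.1) p.2) ∨
      (∃ c ∈ ({r, g, b} : Set ℕ), ∃ c' ∈ ({r, g, b} : Set ℕ),
        c ≠ c' ∧ a = GroundAtom.prop neqP c c') := by
    intro a
    rw [hD]
    simp only [Set.mem_union, Set.mem_image, Set.mem_setOf_eq]
    constructor
    · rintro (⟨p, hp, hpa⟩ | h)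
      · exact Or.inl ⟨p, hp, hpa.symm⟩
      · exact Or.inr h
    · rintro (⟨p, hp, hpa⟩ | h)
      · exact Or.inl ⟨p, hp, hpa.symm⟩
      · exact Or.inr h
  have hvars : bgpVars Q = Set.range x := by
    ext y
    simp only [bgpVars, Set.mem_iUnion, Set.mem_range]
    constructor
    · rintro ⟨ψ, hψ, hy⟩
      rcases (memQ ψ).1 hψ with ⟨i, rfl⟩ | ⟨i, j, hadj, rfl⟩
      · simp only [BAtom.vars, Term.vars, Set.empty_union, Set.mem_singleton_iff] at hy
        exact ⟨i, hy.symm⟩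
      · simp only [BAtom.vars, Term.vars, Set.mem_union, Set.mem_singleton_iff] at hy
        rcases hy with h | h
        · exact ⟨i, h.symm⟩
        · exact ⟨j, h.symm⟩
    · rintro ⟨i, rfl⟩
      refine ⟨BAtom.prop colP (Term.node (v i)) (Term.var (x i)), (memQ _).2 (Or.inl ⟨i, rfl⟩), ?_⟩
      simp [BAtom.vars, Term.vars]
  have rgb : ∀ c, c ∈ ({r, g, b} : Set ℕ) ↔ c = r ∨ c = g ∨ c = b := by
    intro c; simp
  -- main characterization
  have key : evalBGP Q D = {μ : Mapping | ∃ f : Fin n → ℕ,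
        (∀ i, f i = r ∨ f i = g ∨ f i = b) ∧
        (∀ i, (i, f i) ∈ A) ∧ (∀ i j, H.Adj i j → f i ≠ f j) ∧
        (∀ i, μ (x i) = some (f i)) ∧ (∀ y : ℕ, (∀ i, x i ≠ y) → μ y = none)} := by
    ext μ
    simp only [evalBGP, Set.mem_setOf_eq, hvars]
    constructor
    · rintro ⟨hdom, hats⟩
      have hsome : ∀ i, ∃ c, μ (x i) = some c := by
        intro i
        have : x i ∈ Mapping.dom μ := by rw [hdom]; exact ⟨i, rfl⟩
        exact Option.isSome_iff_exists.1 this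
      choose f hf using hsome
      have hcol : ∀ i, (i, f i) ∈ A := by
        intro i
        obtain ⟨a, ha, hga⟩ := hats _ ((memQ _).2 (Or.inl ⟨i, rfl⟩))
        simp only [BAtom.ground, Term.eval, hf i, Option.bind_some, Option.map_some,
          Option.bind_some, Option.map_some] at hga
        rw [Option.some.injEq] at hga
        rcases (memD a).1 ha with ⟨p, hp, rfl⟩ | ⟨c, hc, c', hc', hne, rfl⟩
        · injection hga with h1 h2 h3
          have hpi : p.1 = i := hv h2.symm
          have : p = (i, f i) := by
            cases p; simp_all
          rwa [← this]
        · injection hga with h1 h2 h3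
          exact absurd h1 hcn
      refine ⟨f, fun i => (rgb _).1 ((rgb _).2 (hA _ (hcol i))), hcol, ?_, hf, ?_⟩
      · intro i j hadj
        obtain ⟨a, ha, hga⟩ := hats _ ((memQ _).2 (Or.inr ⟨i, j, hadj, rfl⟩))
        simp only [BAtom.ground, Term.eval, hf i, hf j, Option.bind_some, Option.map_some,
          Option.bind_some, Option.map_some] at hga
        rw [Option.some.injEq] at hga
        rcases (memD a).1 ha with ⟨p, hp, rfl⟩ | ⟨c, hc, c', hc', hne, rfl⟩
        · injection hga with h1 h2 h3
          exact absurd h1.symm hcn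
        · injection hga with h1 h2 h3
          rw [h2, h3]; exact hne
      · intro y hy
        by_contra hne
        have : y ∈ Mapping.dom μ := by
          simp only [Mapping.dom, Set.mem_setOf_eq, Option.isSome_iff_ne_none]
          exact fun h => hne h
        rw [hdom] at this
        obtain ⟨i, hi⟩ := this
        exact hy i hi
    · rintro ⟨f, hfrgb, hfA, hfedge, hfx, hnone⟩
      constructor
      · ext y
        simp only [Mapping.dom, Set.mem_setOf_eq, Set.mem_range]
        constructor
        · intro hy
          by_contra hc
          push_neg at hc
          have := hnone y (fun i h => hc i h)
          rw [this] at hy; simp at hy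
        · rintro ⟨i, rfl⟩
          rw [hfx i]; rfl
      · intro ψ hψ
        rcases (memQ ψ).1 hψ with ⟨i, rfl⟩ | ⟨i, j, hadj, rfl⟩
        · refine ⟨GroundAtom.prop colP (v i) (f i),
            (memD _).2 (Or.inl ⟨(i, f i), hfA i, rfl⟩), ?_⟩
          simp [BAtom.ground, Term.eval, hfx i]
        · refine ⟨GroundAtom.prop neqP (f i) (f j),
            (memD _).2 (Or.inr ⟨f i, (rgb _).2 (hfrgb i), f j, (rgb _).2 (hfrgb j),
              hfedge i j hadj, rfl⟩), ?_⟩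
          simp [BAtom.ground, Term.eval, hfx i, hfx j]
  refine ⟨?_, key⟩
  constructor
  · rintro ⟨μ, hμ⟩
    rw [key] at hμ
    obtain ⟨f, h1, h2, h3, _, _⟩ := hμ
    exact ⟨f, h1, h2, h3⟩
  · rintro ⟨f, h1, h2, h3⟩
    refine ⟨fun y => if h : ∃ i, x i = y then some (f h.choose) else none, ?_⟩
    rw [key]
    refine ⟨f, h1, h2, h3, ?_, ?_⟩
    · intro i
      have h : ∃ j, x j = x i := ⟨i, rfl⟩
      have : h.choose = i := hx h.choose_spec
      simp [h, this]
    · intro y hy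
      have h : ¬ ∃ i, x i = y := by push_neg; exact hy
      simp [h]
end

section
/- Let P, P_1, …, P_k be BGPs such that for all 1 ≤ i < j ≤ k, every variable occurring in both P_i and P_j also occurs in vars(P) (this is exactly well-designedness of the OPT-chain pattern Q = ((…((P OPT P_1) OPT P_2) …) OPT P_k)). Then for all RDF graphs G ⊆ G' and every mapping μ ∈ ⟦Q⟧_G, there exists a mapping μ' ∈ ⟦Q⟧_{G'} that extends μ (i.e., dom(μ) ⊆ dom(μ') and μ'(x) = μ(x) for all x ∈ dom(μ)). (This is the weak monotonicity of well-designed queries used by the paper: a solution is not lost, but may be extended, when new facts are added to the data.) -/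
section Aux

lemma Mapping.union_dom (μ1 μ2 : Mapping) :
    (Mapping.union μ1 μ2).dom = μ1.dom ∪ μ2.dom := by
  ext x
  simp only [Mapping.dom, Mapping.union, Set.mem_setOf_eq, Set.mem_union]
  cases μ1 x <;> simp [Option.orElse]

lemma Mapping.union_eq_left {μ1 μ2 : Mapping} {x : ℕ} (h : (μ1 x).isSome) :
    Mapping.union μ1 μ2 x = μ1 x := by
  unfold Mapping.union
  cases hx : μ1 x with
  | none => rw [hx] at h; simp at h
  | some a => simp [Option.orElse]

lemma Mapping.union_eq_right {μ1 μ2 : Mapping} {x : ℕ} (h : μ1 x = none) :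
    Mapping.union μ1 μ2 x = μ2 x := by
  unfold Mapping.union; rw [h]; rfl

lemma evalBGP_mono {Q : List BAtom} {G G' : Set GroundAtom} (hGG' : G ⊆ G') :
    evalBGP Q G ⊆ evalBGP Q G' := by
  intro μ hμ
  exact ⟨hμ.1, fun ψ hψ => by
    obtain ⟨a, ha, he⟩ := hμ.2 ψ hψ
    exact ⟨a, hGG' ha, he⟩⟩

/-- Domain of any solution of an OPT-chain: it contains the variables of the base
pattern, and is contained in the variables of the whole chain. -/
lemma chain_dom (V : Set ℕ) (P0 : Pattern)
    (hP0 : ∀ (G : Set GroundAtom) μ, μ ∈ evalPattern G P0 → μ.dom = V)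
    (Qs : List Pattern)
    (hQ : ∀ Q ∈ Qs, ∀ (G : Set GroundAtom) μ, μ ∈ evalPattern G Q → μ.dom = Q.vars) :
    ∀ (G : Set GroundAtom) μ, μ ∈ evalPattern G (Qs.foldl Pattern.opt P0) →
      V ⊆ μ.dom ∧ μ.dom ⊆ V ∪ ⋃ Q ∈ Qs, Pattern.vars Q := by
  induction Qs using List.reverseRecOn with
  | nil =>
    intro G μ hμ
    rw [List.foldl_nil] at hμ
    rw [hP0 G μ hμ]
    simp
  | append_singleton l q ih =>
    have hQl : ∀ Q ∈ l, ∀ (G : Set GroundAtom) μ, μ ∈ evalPattern G Q → μ.dom = Q.vars :=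
      fun Q hQ' => hQ Q (by simp [hQ'])
    have hQq : ∀ (G : Set GroundAtom) μ, μ ∈ evalPattern G q → μ.dom = q.vars :=
      hQ q (by simp)
    intro G μ hμ
    rw [List.foldl_append, List.foldl_cons, List.foldl_nil] at hμ
    have hsub : (V ∪ ⋃ Q ∈ l, Pattern.vars Q) ∪ q.vars ⊆
        V ∪ ⋃ Q ∈ (l ++ [q]), Pattern.vars Q := by
      intro x hx
      simp only [Set.mem_union, Set.mem_iUnion, List.mem_append, List.mem_singleton,
        exists_prop] at hx ⊢
      rcases hx with (hx | ⟨Q, hQ', hxQ⟩) | hx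
      · exact Or.inl hx
      · exact Or.inr ⟨Q, Or.inl hQ', hxQ⟩
      · exact Or.inr ⟨q, Or.inr rfl, hx⟩
    rcases hμ with ⟨μ1, h1, μ2, h2, hc, rfl⟩ | ⟨h1, -⟩
    · obtain ⟨hV1, hb1⟩ := ih hQl G μ1 h1
      rw [Mapping.union_dom]
      constructor
      · exact hV1.trans Set.subset_union_left
      · intro x hx
        rcases hx with hx | hx
        · exact hsub (Or.inl (hb1 hx))
        · rw [hQq G μ2 h2] at hx
          exact hsub (Or.inr hx)
    · obtain ⟨hV1, hb1⟩ := ih hQl G μ h1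
      exact ⟨hV1, fun x hx => hsub (Or.inl (hb1 hx))⟩

/-- Main lemma: weak monotonicity of well-designed OPT-chains, stated for an
abstract base pattern and an abstract list of optional patterns. -/
lemma chain_mono (V : Set ℕ) (P0 : Pattern)
    (hP0dom : ∀ (G : Set GroundAtom) μ, μ ∈ evalPattern G P0 → μ.dom = V)
    (hP0mono : ∀ (G G' : Set GroundAtom), G ⊆ G' → evalPattern G P0 ⊆ evalPattern G' P0)
    (Qs : List Pattern)
    (hQdom : ∀ Q ∈ Qs, ∀ (G : Set GroundAtom) μ, μ ∈ evalPattern G Q → μ.dom = Q.vars)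
    (hQmono : ∀ Q ∈ Qs, ∀ (G G' : Set GroundAtom), G ⊆ G' →
      evalPattern G Q ⊆ evalPattern G' Q)
    (hwd : Qs.Pairwise (fun Q1 Q2 => ∀ x, x ∈ Q1.vars → x ∈ Q2.vars → x ∈ V)) :
    ∀ (G G' : Set GroundAtom), G ⊆ G' →
      ∀ μ ∈ evalPattern G (Qs.foldl Pattern.opt P0),
        ∃ μ' ∈ evalPattern G' (Qs.foldl Pattern.opt P0),
          μ.dom ⊆ μ'.dom ∧ ∀ x ∈ μ.dom, μ' x = μ x := by
  induction Qs using List.reverseRecOn with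
  | nil =>
    intro G G' hGG' μ hμ
    rw [List.foldl_nil] at hμ ⊢
    exact ⟨μ, hP0mono G G' hGG' hμ, subset_rfl, fun x _ => rfl⟩
  | append_singleton l q ih =>
    have hQl : ∀ Q ∈ l, ∀ (G : Set GroundAtom) μ, μ ∈ evalPattern G Q → μ.dom = Q.vars :=
      fun Q hQ' => hQdom Q (by simp [hQ'])
    have hQq : ∀ (G : Set GroundAtom) μ, μ ∈ evalPattern G q → μ.dom = q.vars :=
      hQdom q (by simp)
    have hQlmono : ∀ Q ∈ l, ∀ (G G' : Set GroundAtom), G ⊆ G' →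
        evalPattern G Q ⊆ evalPattern G' Q :=
      fun Q hQ' => hQmono Q (by simp [hQ'])
    have hQqmono : ∀ (G G' : Set GroundAtom), G ⊆ G' →
        evalPattern G q ⊆ evalPattern G' q := hQmono q (by simp)
    rw [List.pairwise_append] at hwd
    obtain ⟨hwdl, -, hwdcross⟩ := hwd
    have ih' := ih hQl hQlmono hwdl
    intro G G' hGG' μ hμ
    rw [List.foldl_append, List.foldl_cons, List.foldl_nil] at hμ ⊢
    rcases hμ with ⟨μ1, h1, μ2, h2, hc, rfl⟩ | ⟨h1, -⟩
    · -- μ = μ1 ∪ μ2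
      obtain ⟨μ1', h1', hdom1, hval1⟩ := ih' G G' hGG' μ1 h1
      have hV1 : V ⊆ μ1.dom := (chain_dom V P0 hP0dom l hQl G μ1 h1).1
      have hb1' : μ1'.dom ⊆ V ∪ ⋃ Q ∈ l, Pattern.vars Q :=
        (chain_dom V P0 hP0dom l hQl G' μ1' h1').2
      have h2' : μ2 ∈ evalPattern G' q := hQqmono G G' hGG' h2
      have hdom2 : μ2.dom = q.vars := hQq G μ2 h2
      -- compatibility of μ1' and μ2 via well-designedness
      have hcompat : Mapping.compatible μ1' μ2 := by
        intro x hx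
        obtain ⟨hx1, hx2⟩ := hx
        have hxV : x ∈ V := by
          rcases hb1' hx1 with hxV | hxU
          · exact hxV
          · simp only [Set.mem_iUnion, exists_prop] at hxU
            obtain ⟨Q, hQ', hxQ⟩ := hxU
            exact hwdcross Q hQ' q (by simp) x hxQ (hdom2 ▸ hx2)
        have hx1d : x ∈ μ1.dom := hV1 hxV
        rw [hval1 x hx1d]
        exact hc x ⟨hx1d, hx2⟩
      refine ⟨Mapping.union μ1' μ2, Or.inl ⟨μ1', h1', μ2, h2', hcompat, rfl⟩, ?_, ?_⟩
      · rw [Mapping.union_dom, Mapping.union_dom]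
        exact Set.union_subset_union_left _ hdom1
      · intro x hx
        by_cases hx1 : (μ1 x).isSome
        · have hx1' : (μ1' x).isSome := hdom1 hx1
          rw [Mapping.union_eq_left hx1', Mapping.union_eq_left hx1]
          exact hval1 x hx1
        · have hx1n : μ1 x = none := Option.not_isSome_iff_eq_none.mp hx1
          rw [Mapping.union_eq_right hx1n]
          have hx2 : x ∈ μ2.dom := by
            have := Mapping.mem_dom.mp hx
            rwa [Mapping.union_eq_right hx1n] at this
          by_cases hx1' : (μ1' x).isSome
          · rw [Mapping.union_eq_left hx1']
            exact hcompat x ⟨hx1', hx2⟩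
          · rw [Mapping.union_eq_right (Option.not_isSome_iff_eq_none.mp hx1')]
    · -- μ ∈ ⟦chain over l⟧ with no compatible solution of q over G
      obtain ⟨μ1', h1', hdom1, hval1⟩ := ih' G G' hGG' μ h1
      by_cases hex : ∃ μ2 ∈ evalPattern G' q, Mapping.compatible μ1' μ2
      · obtain ⟨μ2, h2', hcompat⟩ := hex
        refine ⟨Mapping.union μ1' μ2, Or.inl ⟨μ1', h1', μ2, h2', hcompat, rfl⟩, ?_, ?_⟩
        · rw [Mapping.union_dom]
          exact hdom1.trans Set.subset_union_left
        · intro x hx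
          rw [Mapping.union_eq_left (hdom1 hx)]
          exact hval1 x hx
      · push_neg at hex
        exact ⟨μ1', Or.inr ⟨h1', hex⟩, hdom1, hval1⟩

end Aux

/-- Weak monotonicity of well-designed OPT-chains: if every variable shared by two
distinct BGPs Pᵢ and Pⱼ of the chain also occurs in vars(P) (which is exactly
well-designedness of the chain ((…((P OPT P₁) OPT P₂) …) OPT P_k)), then for all RDF
graphs G ⊆ G', every answer μ of the chain over G extends to an answer μ' of the chain
over G'. -/
theorem optChain_weak_monotonicity (P : List BAtom) (Ps : List (List BAtom))
    (hwd : ∀ i j : Fin Ps.length, i < j →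
      ∀ x : ℕ, x ∈ bgpVars (Ps.get i) → x ∈ bgpVars (Ps.get j) → x ∈ bgpVars P)
    (G G' : Set GroundAtom) (hGG' : G ⊆ G')
    (μ : Mapping)
    (hμ : μ ∈ evalPattern G ((Ps.map Pattern.bgp).foldl Pattern.opt (Pattern.bgp P))) :
    ∃ μ' ∈ evalPattern G' ((Ps.map Pattern.bgp).foldl Pattern.opt (Pattern.bgp P)),
      μ.dom ⊆ μ'.dom ∧ ∀ x ∈ μ.dom, μ' x = μ x := by
  have hQdom : ∀ Q ∈ Ps.map Pattern.bgp, ∀ (G : Set GroundAtom) μ,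
      μ ∈ evalPattern G Q → μ.dom = Q.vars := by
    intro Q hQ G₀ ν hν
    obtain ⟨B, hB, rfl⟩ := List.mem_map.mp hQ
    exact hν.1
  have hQmono : ∀ Q ∈ Ps.map Pattern.bgp, ∀ (G G' : Set GroundAtom), G ⊆ G' →
      evalPattern G Q ⊆ evalPattern G' Q := by
    intro Q hQ G₀ G₁ h01
    obtain ⟨B, hB, rfl⟩ := List.mem_map.mp hQ
    exact evalBGP_mono h01
  have hP0dom : ∀ (G : Set GroundAtom) ν, ν ∈ evalPattern G (Pattern.bgp P) →
      ν.dom = bgpVars P := fun _ _ hν => hν.1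
  have hP0mono : ∀ (G G' : Set GroundAtom), G ⊆ G' →
      evalPattern G (Pattern.bgp P) ⊆ evalPattern G' (Pattern.bgp P) :=
    fun _ _ h => evalBGP_mono h
  have hwd' : (Ps.map Pattern.bgp).Pairwise
      (fun Q1 Q2 => ∀ x, x ∈ Q1.vars → x ∈ Q2.vars → x ∈ bgpVars P) := by
    rw [List.pairwise_map, List.pairwise_iff_get]
    intro i j hij
    exact hwd i j hij
  exact chain_mono (bgpVars P) (Pattern.bgp P) hP0dom hP0mono (Ps.map Pattern.bgp)
    hQdom hQmono hwd' G G' hGG' μ hμ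
end
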